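/- Let θ ∈ ℂ³ satisfy θ·θ = 0, |Re θ| = |Im θ| = 1, and let ℓ₀ ∈ ℝ³ satisfy θ·ℓ₀ = 0. Define ζ(τ) = (1/2)ℓ₀ + τθ + τρ(τ) Re θ with ρ(τ) = √(1 - |ℓ₀|²/(4τ²)) - 1. Then ζ(τ)·ζ(τ) = 0 for all τ > |ℓ₀|/2. -/
import Mathlib


open Complex

/-- If θ·θ = 0, |Re θ| = |Im θ| = 1, θ·ℓ₀ = 0 and
ζ(τ) = (1/2)ℓ₀ + τθ + τρ(τ)Re θ with ρ(τ) = √(1 - |ℓ₀|²/(4τ²)) - 1,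
then ζ(τ)·ζ(τ) = 0 for τ > |ℓ₀|/2. -/
theorem zeta_isotropic (θ : Fin 3 → ℂ) (ℓ₀ : Fin 3 → ℝ)
    (hiso : ∑ i, θ i ^ 2 = 0)
    (hre : ∑ i, (θ i).re ^ 2 = 1) (him : ∑ i, (θ i).im ^ 2 = 1)
    (horth : ∑ i, θ i * (ℓ₀ i : ℂ) = 0)
    (τ : ℝ) (hτ : Real.sqrt (∑ i, ℓ₀ i ^ 2) / 2 < τ) :
    ∑ i, ((1/2 : ℂ) * (ℓ₀ i : ℂ) + (τ : ℂ) * θ i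
        + (τ : ℂ) * ((Real.sqrt (1 - (∑ j, ℓ₀ j ^ 2) / (4 * τ ^ 2)) - 1 : ℝ) : ℂ)
          * ((θ i).re : ℂ)) ^ 2 = 0 := by
  have hL0 : (0:ℝ) ≤ ∑ i, ℓ₀ i ^ 2 := Finset.sum_nonneg fun i _ => sq_nonneg _
  have hτ0 : 0 < τ := lt_of_le_of_lt (by positivity) hτ
  have hL4 : ∑ i, ℓ₀ i ^ 2 < 4 * τ ^ 2 := by
    nlinarith [Real.sq_sqrt hL0, Real.sqrt_nonneg (∑ i, ℓ₀ i ^ 2)]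
  have hrad : (0:ℝ) ≤ 1 - (∑ j, ℓ₀ j ^ 2) / (4 * τ ^ 2) := by
    rw [sub_nonneg, div_le_one (by positivity)]; linarith
  set s := Real.sqrt (1 - (∑ j, ℓ₀ j ^ 2) / (4 * τ ^ 2)) with hs
  have hs2 : s ^ 2 * (4 * τ ^ 2) = 4 * τ ^ 2 - ∑ j, ℓ₀ j ^ 2 := by
    rw [Real.sq_sqrt hrad]; field_simp
  simp only [Fin.sum_univ_three, pow_two] at *
  rw [Complex.ext_iff] at hiso horth ⊢
  obtain ⟨hiso1, hiso2⟩ := hiso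
  obtain ⟨horth1, horth2⟩ := horth
  simp only [Complex.add_re, Complex.add_im, Complex.mul_re, Complex.mul_im,
    Complex.ofReal_re, Complex.ofReal_im, Complex.zero_re, Complex.zero_im,
    Complex.one_re, Complex.one_im, Complex.div_re, Complex.div_im,
    Complex.re_ofNat, Complex.im_ofNat, Complex.normSq_apply,
    Complex.sub_re, Complex.sub_im] at *
  constructor
  · linear_combination τ*s*horth1 + τ^2*s^2*hre - τ^2*him + (1/4)*hs2
  · linear_combination τ*horth2 + τ^2*s*hiso2
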